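/- (Conditional-on-covariates identification of the CLATE numerator and denominator.) Let T be a measurable space, f : S → T measurable, and V := f ∘ X. Under unconfoundedness, positivity, and monotonicity, the following hold P-almost surely: E[m1(X) − m0(X) | σ(V)] = E[(Y1 − Y0)·1{A1 > A0} | σ(V)] and E[ℓ1(X) − ℓ0(X) | σ(V)] = P(A1 > A0 | σ(V)), where σ(V) is the σ-algebra generated by V. -/

import Mathlib

/-!
On `{Z = z}` the observed outcome is the potential outcome `Y(A_z) = (1 - A_z) Y0 + A_z Y1`, so
`m_z(X) P(Z = z | X) = E[1{Z = z} Y(A_z) | X]`, which by unconfoundedness equals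
`P(Z = z | X) E[Y(A_z) | X]`; positivity lets us cancel, giving `m_z(X) = E[Y(A_z) | X]`. Under
monotonicity `Y(A1) - Y(A0) = 1{A1 > A0} (Y1 - Y0)` a.s., and the tower property passes from `σ(X)`
to the coarser `σ(V)`. The second identity is the first one for `Y0 = 0`, `Y1 = 1`, where the
observed outcome is `A`.

The hypotheses only test against bounded functions of `X`, so `m_z(X)` is not known to be
integrable; testing against the sign of `m_z` cut off at level `n` and using positivity bounds
`E[|m_z(X)|; |m_z(X)| ≤ n]` uniformly in `n`.
-/

open MeasureTheory Filter

section

variable {Ω S : Type*} [mΩ : MeasurableSpace Ω] [mS : MeasurableSpace S]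

/-- The weak form of `E[u | X] = E[v | X]` in which the hypotheses are stated: it needs no
integrability, and for integrable `u`, `v` it is `P[u | σ(X)] =ᵐ P[v | σ(X)]`. -/
def IntegralEqGiven (P : Measure Ω) (X : Ω → S) (u v : Ω → ℝ) : Prop :=
  ∀ g : S → ℝ, Measurable g → (∃ C, ∀ x, |g x| ≤ C) →
    ∫ ω, u ω * g (X ω) ∂P = ∫ ω, v ω * g (X ω) ∂P

variable {P : Measure Ω} {X : Ω → S} {u v : Ω → ℝ}

theorem exists_mul_eq_indicator_abs {q : S → ℝ} (hq : Measurable q) {s : Set S}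
    (hs : MeasurableSet s) :
    ∃ g : S → ℝ, Measurable g ∧ (∀ x, |g x| ≤ 1) ∧
      ∀ x, s.indicator (fun x => |q x|) x = q x * g x := by
  refine ⟨s.indicator fun x => |q x| / q x, (hq.abs.div hq).indicator hs, fun x => ?_, fun x => ?_⟩
  · by_cases hx : x ∈ s <;> simp [hx, abs_div, div_self_le_one]
  · by_cases hx : x ∈ s
    · rcases eq_or_ne (q x) 0 with h0 | h0
      · simp [h0]
      · simp only [Set.indicator_of_mem hx]
        field_simp
    · simp [hx]

namespace IntegralEqGiven

theorem refl (P : Measure Ω) (X : Ω → S) (u : Ω → ℝ) : IntegralEqGiven P X u u :=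
  fun _ _ _ => rfl

theorem sub (hX : Measurable X) {u₁ v₁ u₂ v₂ : Ω → ℝ} (h₁ : IntegralEqGiven P X u₁ v₁)
    (h₂ : IntegralEqGiven P X u₂ v₂) (hu₁ : Integrable u₁ P) (hv₁ : Integrable v₁ P)
    (hu₂ : Integrable u₂ P) (hv₂ : Integrable v₂ P) :
    IntegralEqGiven P X (u₁ - u₂) (v₁ - v₂) := by
  rintro g hg ⟨C, hC⟩
  have hint : ∀ {w : Ω → ℝ}, Integrable w P → Integrable (fun ω => w ω * g (X ω)) P :=
    fun hw => hw.mul_bdd (hg.comp hX).aestronglyMeasurable (ae_of_all _ fun ω => hC (X ω))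
  simp only [Pi.sub_apply, sub_mul]
  rw [integral_sub (hint hu₁) (hint hu₂), integral_sub (hint hv₁) (hint hv₂),
    h₁ g hg ⟨C, hC⟩, h₂ g hg ⟨C, hC⟩]

theorem condExp_ae_eq [IsFiniteMeasure P] (hX : Measurable X) (h : IntegralEqGiven P X u v)
    (hu : Integrable u P) (hv : Integrable v P) :
    P[u | mS.comap X] =ᵐ[P] P[v | mS.comap X] := by
  refine ae_eq_condExp_of_forall_setIntegral_eq hX.comap_le hv
    (fun _ _ _ => integrable_condExp.integrableOn) ?_
    stronglyMeasurable_condExp.aestronglyMeasurable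
  rintro _ ⟨B, hB, rfl⟩ -
  have hind : ∀ w : Ω → ℝ, ∫ ω in X ⁻¹' B, w ω ∂P = ∫ ω, w ω * B.indicator 1 (X ω) ∂P := by
    intro w
    rw [← integral_indicator (hX hB)]
    congr 1 with ω
    by_cases hω : X ω ∈ B <;> simp [hω]
  rw [setIntegral_condExp hX.comap_le hu ⟨B, hB, rfl⟩, hind, hind]
  refine h _ (measurable_one.indicator hB) ⟨1, fun x => ?_⟩
  by_cases hx : x ∈ B <;> simp [hx]

theorem of_bounded_on_range {E : Type*} [MeasurableSpace E] {U : Ω → E}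
    (h : ∀ ψ : E → ℝ, Measurable ψ → (∃ C, ∀ y, |ψ y| ≤ C) →
      IntegralEqGiven P X (fun ω => u ω * ψ (U ω)) (fun ω => v ω * ψ (U ω)))
    {ψ : E → ℝ} (hψ : Measurable ψ) {C : ℝ} (hC : ∀ ω, |ψ (U ω)| ≤ C) :
    IntegralEqGiven P X (fun ω => u ω * ψ (U ω)) (fun ω => v ω * ψ (U ω)) := by
  have hclamp : ∀ ω, max (-|C|) (min |C| (ψ (U ω))) = ψ (U ω) := fun ω => by
    have := abs_le.1 ((hC ω).trans (le_abs_self C))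
    rw [min_eq_right this.2, max_eq_right this.1]
  simpa only [hclamp] using h (fun y => max (-|C|) (min |C| (ψ y)))
    (measurable_const.max (measurable_const.min hψ))
    ⟨|C|, fun y => abs_le.2
      ⟨le_max_left _ _, max_le (by linarith [abs_nonneg C]) (min_le_left _ _)⟩⟩

theorem one_sub_mul (hX : Measurable X) {W ψ : Ω → ℝ} {p : S → ℝ}
    (h : IntegralEqGiven P X (fun ω => W ω * ψ ω) (fun ω => p (X ω) * ψ ω))
    (hW : Measurable W) (hW1 : ∀ ω, |W ω| ≤ 1) (hp : Measurable p) (hp1 : ∀ x, |p x| ≤ 1)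
    (hψ : Integrable ψ P) :
    IntegralEqGiven P X (fun ω => (1 - W ω) * ψ ω) (fun ω => (1 - p (X ω)) * ψ ω) := by
  have := (refl P X ψ).sub hX h hψ hψ
    (hψ.bdd_mul hW.aestronglyMeasurable (ae_of_all _ hW1))
    (hψ.bdd_mul (hp.comp hX).aestronglyMeasurable (ae_of_all _ fun ω => hp1 (X ω)))
  convert this using 1 <;> ext ω <;> simp only [Pi.sub_apply] <;> ring

end IntegralEqGiven

theorem integrable_of_abs_le [IsFiniteMeasure P] {w : Ω → ℝ} (hw : Measurable w) {C : ℝ}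
    (hC : ∀ ω, |w ω| ≤ C) : Integrable w P :=
  .of_bound hw.aestronglyMeasurable C (ae_of_all _ hC)

theorem integral_comp_le_of_integralEqGiven [IsFiniteMeasure P] (hX : Measurable X)
    {W : Ω → ℝ} {p : S → ℝ} (hp : Measurable p) {ε : ℝ} (hε : 0 < ε) (hpε : ∀ x, ε ≤ p x)
    (hp1 : ∀ x, p x ≤ 1) (hWp : IntegralEqGiven P X W (fun ω => p (X ω)))
    {t : S → ℝ} (ht : Measurable t) (ht0 : ∀ x, 0 ≤ t x) {C : ℝ} (htC : ∀ x, t x ≤ C) :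
    ∫ ω, t (X ω) ∂P ≤ (∫ ω, W ω * t (X ω) ∂P) / ε := by
  have htC' : ∀ x, |t x| ≤ C := fun x => by rw [abs_of_nonneg (ht0 x)]; exact htC x
  have htX : Integrable (fun ω => t (X ω)) P :=
    integrable_of_abs_le (ht.comp hX) fun ω => htC' _
  rw [hWp t ht ⟨C, htC'⟩, le_div_iff₀ hε, ← integral_mul_const]
  refine integral_mono (htX.mul_const ε) (htX.bdd_mul (hp.comp hX).aestronglyMeasurable
    (c := 1) (ae_of_all _ fun ω => ?_)) fun ω => ?_
  · rw [Real.norm_eq_abs, abs_of_pos (hε.trans_le (hpε _))]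
    exact hp1 _
  · rw [mul_comm]
    exact mul_le_mul_of_nonneg_right (hpε _) (ht0 _)

variable [IsProbabilityMeasure P]

theorem integrable_comp_of_integralEqGiven (hX : Measurable X) {W : Ω → ℝ} {p : S → ℝ}
    (hp : Measurable p) {ε : ℝ} (hε : 0 < ε) (hpε : ∀ x, ε ≤ p x) (hp1 : ∀ x, p x ≤ 1)
    (hWp : IntegralEqGiven P X W (fun ω => p (X ω)))
    {C : ℝ} (huC : ∀ ω, |u ω| ≤ C)
    {q : S → ℝ} (hq : Measurable q) (huq : IntegralEqGiven P X u (fun ω => q (X ω) * W ω)) :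
    Integrable (fun ω => q (X ω)) P := by
  set s : ℕ → Set S := fun n => {x | |q x| ≤ n}
  have hs : ∀ n, MeasurableSet (s n) := fun n => measurableSet_le hq.abs measurable_const
  have hcover : AECover P atTop (fun n => X ⁻¹' s n) :=
    ⟨ae_of_all _ fun ω => tendsto_natCast_atTop_atTop.eventually_ge_atTop |q (X ω)|,
      fun n => hX (hs n)⟩
  refine hcover.integrable_of_integral_norm_bounded (C / ε) (fun n => ?_)
    (Eventually.of_forall fun n => ?_)
  · exact IntegrableOn.of_bound (measure_lt_top _ _) (hq.comp hX).aestronglyMeasurable n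
      (ae_restrict_of_forall_mem (hX (hs n)) fun ω hω => hω)
  obtain ⟨g, hg, hg1, hqg⟩ := exists_mul_eq_indicator_abs hq (hs n)
  set t : S → ℝ := (s n).indicator fun x => |q x|
  have ht0 : ∀ x, 0 ≤ t x := Set.indicator_nonneg fun _ _ => abs_nonneg _
  have htn : ∀ x, t x ≤ n := fun x => by
    by_cases hx : x ∈ s n
    · simp only [t, Set.indicator_of_mem hx]
      exact hx
    · simp [t, hx]
  calc ∫ ω in X ⁻¹' s n, ‖q (X ω)‖ ∂P = ∫ ω, t (X ω) ∂P := by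
        rw [← integral_indicator (hX (hs n))]
        congr 1 with ω
    _ ≤ (∫ ω, W ω * t (X ω) ∂P) / ε :=
        integral_comp_le_of_integralEqGiven hX hp hε hpε hp1 hWp
          (hq.abs.indicator (hs n)) ht0 htn
    _ = (∫ ω, u ω * g (X ω) ∂P) / ε := by
        rw [huq g hg ⟨1, hg1⟩]
        congr 2 with ω
        rw [hqg]
        ring
    _ ≤ C / ε := by
        gcongr
        have hbound : ‖∫ ω, u ω * g (X ω) ∂P‖ ≤ C * P.real Set.univ :=
          norm_integral_le_of_norm_le_const (ae_of_all _ fun ω => by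
            rw [norm_mul]
            exact (mul_le_mul (huC ω) (hg1 _) (abs_nonneg _)
              ((abs_nonneg _).trans (huC ω))).trans_eq (mul_one C))
        rw [probReal_univ, mul_one] at hbound
        exact (le_abs_self _).trans hbound

theorem comp_ae_eq_condExp_of_condIndep_weight (hX : Measurable X)
    {W : Ω → ℝ} (hW : Measurable W) (hW1 : ∀ ω, |W ω| ≤ 1)
    {p : S → ℝ} (hp : Measurable p) {ε : ℝ} (hε : 0 < ε) (hpε : ∀ x, ε ≤ p x) (hp1 : ∀ x, p x ≤ 1)
    (hWp : IntegralEqGiven P X W (fun ω => p (X ω)))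
    {ψ : Ω → ℝ} (hψ : Measurable ψ) {C : ℝ} (hψC : ∀ ω, |ψ ω| ≤ C)
    (hWψ : IntegralEqGiven P X (fun ω => W ω * ψ ω) (fun ω => p (X ω) * ψ ω))
    {q : S → ℝ} (hq : Measurable q)
    (hqψ : IntegralEqGiven P X (fun ω => W ω * ψ ω) (fun ω => q (X ω) * W ω)) :
    (fun ω => q (X ω)) =ᵐ[P] P[ψ | mS.comap X] := by
  have hm : mS.comap X ≤ mΩ := hX.comap_le
  have hcomp : ∀ {r : S → ℝ}, Measurable r → StronglyMeasurable[mS.comap X] (fun ω => r (X ω)) :=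
    fun hr => (hr.comp (comap_measurable X)).stronglyMeasurable
  have hpX1 : ∀ ω, |p (X ω)| ≤ 1 := fun ω => by
    rw [abs_of_pos (hε.trans_le (hpε _))]; exact hp1 _
  have hWi : Integrable W P := integrable_of_abs_le hW hW1
  have hψi : Integrable ψ P := integrable_of_abs_le hψ hψC
  have hpi : Integrable (fun ω => p (X ω)) P := integrable_of_abs_le (hp.comp hX) hpX1
  have hWψi : Integrable (W * ψ) P := hψi.bdd_mul hW.aestronglyMeasurable (ae_of_all _ hW1)
  have hqi : Integrable (fun ω => q (X ω)) P :=
    integrable_comp_of_integralEqGiven hX hp hε hpε hp1 hWp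
      (C := C) (fun ω => (abs_mul _ _).trans_le
        ((mul_le_mul (hW1 ω) (hψC ω) (abs_nonneg _) zero_le_one).trans_eq (one_mul C))) hq hqψ
  have hpW : P[W | mS.comap X] =ᵐ[P] fun ω => p (X ω) :=
    (hWp.condExp_ae_eq hX hWi hpi).trans
      (condExp_of_stronglyMeasurable hm (hcomp hp) hpi).eventuallyEq
  have hpψi : Integrable ((fun ω => p (X ω)) * ψ) P :=
    hψi.bdd_mul (hp.comp hX).aestronglyMeasurable (ae_of_all _ hpX1)
  have hqWi : Integrable ((fun ω => q (X ω)) * W) P :=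
    hqi.mul_bdd hW.aestronglyMeasurable (ae_of_all _ hW1)
  have hpψ : P[W * ψ | mS.comap X] =ᵐ[P] (fun ω => p (X ω)) * P[ψ | mS.comap X] :=
    (hWψ.condExp_ae_eq hX hWψi hpψi).trans
      (condExp_mul_of_stronglyMeasurable_left (hcomp hp) hpψi hψi)
  have hqW : P[W * ψ | mS.comap X] =ᵐ[P] (fun ω => q (X ω)) * fun ω => p (X ω) :=
    (hqψ.condExp_ae_eq hX hWψi hqWi).trans
      ((condExp_mul_of_stronglyMeasurable_left (hcomp hq) hqWi hWi).trans hpW.mul_left)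
  filter_upwards [hpψ, hqW] with ω h₁ h₂
  have hpω : p (X ω) ≠ 0 := (hε.trans_le (hpε _)).ne'
  rw [h₁] at h₂
  simp only [Pi.mul_apply] at h₂
  exact (mul_left_cancel₀ hpω (h₂.trans (mul_comm _ _))).symm

theorem comp_ae_eq_condExp_of_condIndep_one_sub_weight (hX : Measurable X)
    {W : Ω → ℝ} (hW : Measurable W) (hW01 : ∀ ω, W ω = 0 ∨ W ω = 1)
    {p : S → ℝ} (hp : Measurable p) {ε : ℝ} (hε : 0 < ε) (hpε : ∀ x, 0 ≤ p x ∧ p x ≤ 1 - ε)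
    (hWp : IntegralEqGiven P X W (fun ω => p (X ω)))
    {ψ : Ω → ℝ} (hψ : Measurable ψ) {C : ℝ} (hψC : ∀ ω, |ψ ω| ≤ C)
    (hWψ : IntegralEqGiven P X (fun ω => W ω * ψ ω) (fun ω => p (X ω) * ψ ω))
    {q : S → ℝ} (hq : Measurable q)
    (hqψ : IntegralEqGiven P X (fun ω => (1 - W ω) * ψ ω) (fun ω => q (X ω) * (1 - W ω))) :
    (fun ω => q (X ω)) =ᵐ[P] P[ψ | mS.comap X] := by
  have hW1 : ∀ ω, |W ω| ≤ 1 := fun ω => by rcases hW01 ω with h | h <;> simp [h]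
  have hp1 : ∀ x, |p x| ≤ 1 := fun x => abs_le.2 ⟨by linarith [hpε x], by linarith [hpε x]⟩
  have hWp' : IntegralEqGiven P X (fun ω => 1 - W ω) (fun ω => 1 - p (X ω)) :=
    (IntegralEqGiven.refl P X 1).sub hX hWp (integrable_const 1) (integrable_const 1)
      (integrable_of_abs_le hW hW1) (integrable_of_abs_le (hp.comp hX) fun ω => hp1 (X ω))
  exact comp_ae_eq_condExp_of_condIndep_weight hX (p := fun x => 1 - p x) (measurable_const.sub hW)
    (fun ω => by rcases hW01 ω with h | h <;> simp [h]) (measurable_const.sub hp) hε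
    (fun x => by linarith [hpε x]) (fun x => by linarith [hpε x]) hWp' hψ hψC
    (hWψ.one_sub_mul hX hW hW1 hp hp1 (integrable_of_abs_le hψ hψC)) hq hqψ

theorem abs_one_sub_mul_add_mul_le {a y₀ y₁ C : ℝ} (ha : a = 0 ∨ a = 1) (h₀ : |y₀| ≤ C)
    (h₁ : |y₁| ≤ C) : |(1 - a) * y₀ + a * y₁| ≤ C := by
  rcases ha with rfl | rfl <;> simpa

theorem ae_eq_condExp_complier_effect (hX : Measurable X)
    {Z A0 A1 Y0 Y1 A Y : Ω → ℝ} (hZ : Measurable Z) (hA0 : Measurable A0) (hA1 : Measurable A1)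
    (hY0 : Measurable Y0) (hY1 : Measurable Y1)
    (hZ01 : ∀ ω, Z ω = 0 ∨ Z ω = 1) (hA0_01 : ∀ ω, A0 ω = 0 ∨ A0 ω = 1)
    (hA1_01 : ∀ ω, A1 ω = 0 ∨ A1 ω = 1) {C : ℝ} (hY0C : ∀ ω, |Y0 ω| ≤ C)
    (hY1C : ∀ ω, |Y1 ω| ≤ C)
    (hA : ∀ ω, A ω = (1 - Z ω) * A0 ω + Z ω * A1 ω)
    (hY : ∀ ω, Y ω = (1 - A ω) * Y0 ω + A ω * Y1 ω)
    {e : S → ℝ} (he : Measurable e) {ε : ℝ} (hε : 0 < ε) (hebd : ∀ x, ε ≤ e x ∧ e x ≤ 1 - ε)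
    (hZe : IntegralEqGiven P X Z (fun ω => e (X ω)))
    (hUnconf : ∀ ψ : ℝ × ℝ × ℝ × ℝ → ℝ, Measurable ψ → (∃ C, ∀ v, |ψ v| ≤ C) →
      IntegralEqGiven P X (fun ω => Z ω * ψ (A0 ω, A1 ω, Y0 ω, Y1 ω))
        (fun ω => e (X ω) * ψ (A0 ω, A1 ω, Y0 ω, Y1 ω)))
    {m0 m1 : S → ℝ} (hm0 : Measurable m0) (hm1 : Measurable m1)
    (hm0v : IntegralEqGiven P X (fun ω => Y ω * if Z ω = 0 then 1 else 0)
      (fun ω => m0 (X ω) * if Z ω = 0 then 1 else 0))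
    (hm1v : IntegralEqGiven P X (fun ω => Y ω * if Z ω = 1 then 1 else 0)
      (fun ω => m1 (X ω) * if Z ω = 1 then 1 else 0))
    (hMono : ∀ᵐ ω ∂P, A0 ω ≤ A1 ω) :
    (fun ω => m1 (X ω) - m0 (X ω)) =ᵐ[P]
      P[{ω | A1 ω = 1 ∧ A0 ω = 0}.indicator (fun ω => Y1 ω - Y0 ω) | mS.comap X] := by
  set ψ1 : Ω → ℝ := fun ω => (1 - A1 ω) * Y0 ω + A1 ω * Y1 ω
  set ψ0 : Ω → ℝ := fun ω => (1 - A0 ω) * Y0 ω + A0 ω * Y1 ω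
  have hψ1 : Measurable ψ1 := by fun_prop
  have hψ0 : Measurable ψ0 := by fun_prop
  have hψ1C : ∀ ω, |ψ1 ω| ≤ C := fun ω => abs_one_sub_mul_add_mul_le (hA1_01 ω) (hY0C ω) (hY1C ω)
  have hψ0C : ∀ ω, |ψ0 ω| ≤ C := fun ω => abs_one_sub_mul_add_mul_le (hA0_01 ω) (hY0C ω) (hY1C ω)
  have hZψ1 : IntegralEqGiven P X (fun ω => Z ω * ψ1 ω) (fun ω => e (X ω) * ψ1 ω) :=
    IntegralEqGiven.of_bounded_on_range hUnconf
      (ψ := fun v => (1 - v.2.1) * v.2.2.1 + v.2.1 * v.2.2.2) (by fun_prop) hψ1C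
  have hZψ0 : IntegralEqGiven P X (fun ω => Z ω * ψ0 ω) (fun ω => e (X ω) * ψ0 ω) :=
    IntegralEqGiven.of_bounded_on_range hUnconf
      (ψ := fun v => (1 - v.1) * v.2.2.1 + v.1 * v.2.2.2) (by fun_prop) hψ0C
  have hind1 : ∀ ω, (if Z ω = 1 then 1 else 0) = Z ω := fun ω => by
    rcases hZ01 ω with h | h <;> simp [h]
  have hind0 : ∀ ω, (if Z ω = 0 then 1 else 0) = 1 - Z ω := fun ω => by
    rcases hZ01 ω with h | h <;> simp [h]
  have hYZ1 : ∀ ω, Y ω * Z ω = Z ω * ψ1 ω := fun ω => by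
    rcases hZ01 ω with h | h <;> simp [hY, hA, h, ψ1]
  have hYZ0 : ∀ ω, Y ω * (1 - Z ω) = (1 - Z ω) * ψ0 ω := fun ω => by
    rcases hZ01 ω with h | h <;> simp [hY, hA, h, ψ0]
  have arm1 : (fun ω => m1 (X ω)) =ᵐ[P] P[ψ1 | mS.comap X] :=
    comp_ae_eq_condExp_of_condIndep_weight hX hZ
      (fun ω => by rcases hZ01 ω with h | h <;> simp [h]) he hε (fun x => (hebd x).1)
      (fun x => by linarith [hebd x]) hZe hψ1 hψ1C hZψ1 hm1
      (by simpa only [hind1, hYZ1] using hm1v)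
  have arm0 : (fun ω => m0 (X ω)) =ᵐ[P] P[ψ0 | mS.comap X] :=
    comp_ae_eq_condExp_of_condIndep_one_sub_weight hX hZ hZ01 he hε
      (fun x => ⟨by linarith [hebd x], (hebd x).2⟩) hZe hψ0 hψ0C hZψ0 hm0
      (by simpa only [hind0, hYZ0] using hm0v)
  have hcompl : ψ1 - ψ0 =ᵐ[P] {ω | A1 ω = 1 ∧ A0 ω = 0}.indicator (fun ω => Y1 ω - Y0 ω) := by
    filter_upwards [hMono] with ω hω
    rcases hA0_01 ω with h0 | h0 <;> rcases hA1_01 ω with h1 | h1 <;> simp [ψ1, ψ0, h0, h1]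
    linarith
  filter_upwards [arm1, arm0, condExp_sub (integrable_of_abs_le hψ1 hψ1C)
    (integrable_of_abs_le hψ0 hψ0C) (mS.comap X), condExp_congr_ae (m := mS.comap X) hcompl]
    with ω h1 h0 hsub hind
  rw [← hind, hsub, Pi.sub_apply, ← h1, ← h0]

end

theorem stmt_18_general
    {Ω : Type*} [MeasurableSpace Ω] (P : Measure Ω) [IsProbabilityMeasure P]
    {S : Type*} [mS : MeasurableSpace S]
    {T : Type*} [mT : MeasurableSpace T]
    (X : Ω → S) (hX : Measurable X)
    (f : S → T) (hf : Measurable f)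
    (Z A0 A1 Y0 Y1 : Ω → ℝ)
    (hZ : Measurable Z) (hA0 : Measurable A0) (hA1 : Measurable A1)
    (hY0 : Measurable Y0) (hY1 : Measurable Y1)
    (hZ01 : ∀ ω, Z ω = 0 ∨ Z ω = 1)
    (hA0_01 : ∀ ω, A0 ω = 0 ∨ A0 ω = 1)
    (hA1_01 : ∀ ω, A1 ω = 0 ∨ A1 ω = 1)
    (hY0b : ∃ C, ∀ ω, |Y0 ω| ≤ C) (hY1b : ∃ C, ∀ ω, |Y1 ω| ≤ C)
    (A Y : Ω → ℝ)
    (hA : A = fun ω => (1 - Z ω) * A0 ω + Z ω * A1 ω)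
    (hY : Y = fun ω => (1 - A ω) * Y0 ω + A ω * Y1 ω)
    (e : S → ℝ) (he : Measurable e) (ε : ℝ) (hε : 0 < ε)
    (hebd : ∀ x, ε ≤ e x ∧ e x ≤ 1 - ε)
    (hVe : ∀ g : S → ℝ, Measurable g → (∃ C, ∀ x, |g x| ≤ C) →
      ∫ ω, Z ω * g (X ω) ∂P = ∫ ω, e (X ω) * g (X ω) ∂P)
    (hUnconf : ∀ ψ : ℝ × ℝ × ℝ × ℝ → ℝ, Measurable ψ → (∃ C, ∀ v, |ψ v| ≤ C) →
      ∀ g : S → ℝ, Measurable g → (∃ C, ∀ x, |g x| ≤ C) →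
      ∫ ω, Z ω * ψ (A0 ω, A1 ω, Y0 ω, Y1 ω) * g (X ω) ∂P
        = ∫ ω, e (X ω) * ψ (A0 ω, A1 ω, Y0 ω, Y1 ω) * g (X ω) ∂P)
    (m0 m1 l0 l1 : S → ℝ)
    (hm0 : Measurable m0) (hm1 : Measurable m1)
    (hl0 : Measurable l0) (hl1 : Measurable l1)
    (hm0v : ∀ g : S → ℝ, Measurable g → (∃ C, ∀ x, |g x| ≤ C) →
      ∫ ω, Y ω * (if Z ω = 0 then (1:ℝ) else 0) * g (X ω) ∂P
        = ∫ ω, m0 (X ω) * (if Z ω = 0 then (1:ℝ) else 0) * g (X ω) ∂P)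
    (hm1v : ∀ g : S → ℝ, Measurable g → (∃ C, ∀ x, |g x| ≤ C) →
      ∫ ω, Y ω * (if Z ω = 1 then (1:ℝ) else 0) * g (X ω) ∂P
        = ∫ ω, m1 (X ω) * (if Z ω = 1 then (1:ℝ) else 0) * g (X ω) ∂P)
    (hl0v : ∀ g : S → ℝ, Measurable g → (∃ C, ∀ x, |g x| ≤ C) →
      ∫ ω, A ω * (if Z ω = 0 then (1:ℝ) else 0) * g (X ω) ∂P
        = ∫ ω, l0 (X ω) * (if Z ω = 0 then (1:ℝ) else 0) * g (X ω) ∂P)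
    (hl1v : ∀ g : S → ℝ, Measurable g → (∃ C, ∀ x, |g x| ≤ C) →
      ∫ ω, A ω * (if Z ω = 1 then (1:ℝ) else 0) * g (X ω) ∂P
        = ∫ ω, l1 (X ω) * (if Z ω = 1 then (1:ℝ) else 0) * g (X ω) ∂P)
    (hMono : P {ω | A0 ω ≤ A1 ω} = 1) :
    (P[fun ω => m1 (X ω) - m0 (X ω) | MeasurableSpace.comap (fun ω => f (X ω)) mT]
      =ᵐ[P]
        P[Set.indicator {ω | A1 ω = 1 ∧ A0 ω = 0} (fun ω => Y1 ω - Y0 ω)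
          | MeasurableSpace.comap (fun ω => f (X ω)) mT])
    ∧ (P[fun ω => l1 (X ω) - l0 (X ω) | MeasurableSpace.comap (fun ω => f (X ω)) mT]
      =ᵐ[P]
        P[Set.indicator {ω | A1 ω = 1 ∧ A0 ω = 0} (fun _ => (1:ℝ))
          | MeasurableSpace.comap (fun ω => f (X ω)) mT]) := by
  obtain ⟨C0, hC0⟩ := hY0b
  obtain ⟨C1, hC1⟩ := hY1b
  have hMono' : ∀ᵐ ω ∂P, A0 ω ≤ A1 ω :=
    (ae_iff_measure_eq (measurableSet_le hA0 hA1).nullMeasurableSet).2 (by rw [hMono, measure_univ])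
  have hV : mT.comap (fun ω => f (X ω)) ≤ mS.comap X := (hf.comp (comap_measurable X)).comap_le
  have tower : ∀ {u v : Ω → ℝ}, u =ᵐ[P] P[v | mS.comap X] →
      P[u | mT.comap (fun ω => f (X ω))] =ᵐ[P] P[v | mT.comap (fun ω => f (X ω))] :=
    fun h => (condExp_congr_ae h).trans (condExp_condExp_of_le hV hX.comap_le)
  constructor
  · exact tower (ae_eq_condExp_complier_effect hX hZ hA0 hA1 hY0 hY1 hZ01 hA0_01 hA1_01
      (fun ω => (hC0 ω).trans (le_max_left C0 C1)) (fun ω => (hC1 ω).trans (le_max_right C0 C1))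
      (fun ω => congrFun hA ω) (fun ω => congrFun hY ω) he hε hebd hVe hUnconf
      hm0 hm1 hm0v hm1v hMono')
  · have hUnconfA : ∀ ψ : ℝ × ℝ × ℝ × ℝ → ℝ, Measurable ψ → (∃ C, ∀ v, |ψ v| ≤ C) →
        IntegralEqGiven P X (fun ω => Z ω * ψ (A0 ω, A1 ω, 0, 1))
          (fun ω => e (X ω) * ψ (A0 ω, A1 ω, 0, 1)) := fun ψ hψ ⟨C, hC⟩ =>
      hUnconf (fun v => ψ (v.1, v.2.1, 0, 1)) (by fun_prop) ⟨C, fun _ => hC _⟩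
    simpa only [sub_zero] using tower (ae_eq_condExp_complier_effect (Y0 := fun _ => 0)
      (Y1 := fun _ => 1) (Y := A) hX hZ hA0 hA1 measurable_const measurable_const hZ01 hA0_01
      hA1_01 (C := 1) (by simp) (by simp) (fun ω => congrFun hA ω) (fun ω => by ring) he hε hebd
      hVe hUnconfA hl0 hl1 hl0v hl1v hMono')

/-- conditional-on-covariates identification of the CLATE numerator and
denominator: with V := f ∘ X, P-a.s.
E[m1(X) − m0(X) | σ(V)] = E[(Y1 − Y0)·1{A1 > A0} | σ(V)] and
E[ℓ1(X) − ℓ0(X) | σ(V)] = P(A1 > A0 | σ(V)). -/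
theorem stmt_18
    {Ω : Type*} [MeasurableSpace Ω] (P : Measure Ω) [IsProbabilityMeasure P]
    {S : Type*} [mS : MeasurableSpace S]
    {T : Type*} [mT : MeasurableSpace T]
    (X : Ω → S) (hX : Measurable X)
    (f : S → T) (hf : Measurable f)
    (Z A0 A1 Y0 Y1 : Ω → ℝ)
    (hZ : Measurable Z) (hA0 : Measurable A0) (hA1 : Measurable A1)
    (hY0 : Measurable Y0) (hY1 : Measurable Y1)
    (hZ01 : ∀ ω, Z ω = 0 ∨ Z ω = 1)
    (hA0_01 : ∀ ω, A0 ω = 0 ∨ A0 ω = 1)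
    (hA1_01 : ∀ ω, A1 ω = 0 ∨ A1 ω = 1)
    (hY0b : ∃ C, ∀ ω, |Y0 ω| ≤ C) (hY1b : ∃ C, ∀ ω, |Y1 ω| ≤ C)
    (A Y : Ω → ℝ)
    (hA : A = fun ω => (1 - Z ω) * A0 ω + Z ω * A1 ω)
    (hY : Y = fun ω => (1 - A ω) * Y0 ω + A ω * Y1 ω)
    (e : S → ℝ) (he : Measurable e) (ε : ℝ) (hε : 0 < ε) (hε2 : ε < 1/2)
    (hebd : ∀ x, ε ≤ e x ∧ e x ≤ 1 - ε)
    (hVe : ∀ g : S → ℝ, Measurable g → (∃ C, ∀ x, |g x| ≤ C) →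
      ∫ ω, Z ω * g (X ω) ∂P = ∫ ω, e (X ω) * g (X ω) ∂P)
    (hUnconf : ∀ ψ : ℝ × ℝ × ℝ × ℝ → ℝ, Measurable ψ → (∃ C, ∀ v, |ψ v| ≤ C) →
      ∀ g : S → ℝ, Measurable g → (∃ C, ∀ x, |g x| ≤ C) →
      ∫ ω, Z ω * ψ (A0 ω, A1 ω, Y0 ω, Y1 ω) * g (X ω) ∂P
        = ∫ ω, e (X ω) * ψ (A0 ω, A1 ω, Y0 ω, Y1 ω) * g (X ω) ∂P)
    (m0 m1 l0 l1 : S → ℝ)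
    (hm0 : Measurable m0) (hm1 : Measurable m1)
    (hl0 : Measurable l0) (hl1 : Measurable l1)
    (hm0v : ∀ g : S → ℝ, Measurable g → (∃ C, ∀ x, |g x| ≤ C) →
      ∫ ω, Y ω * (if Z ω = 0 then (1:ℝ) else 0) * g (X ω) ∂P
        = ∫ ω, m0 (X ω) * (if Z ω = 0 then (1:ℝ) else 0) * g (X ω) ∂P)
    (hm1v : ∀ g : S → ℝ, Measurable g → (∃ C, ∀ x, |g x| ≤ C) →
      ∫ ω, Y ω * (if Z ω = 1 then (1:ℝ) else 0) * g (X ω) ∂P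
        = ∫ ω, m1 (X ω) * (if Z ω = 1 then (1:ℝ) else 0) * g (X ω) ∂P)
    (hl0v : ∀ g : S → ℝ, Measurable g → (∃ C, ∀ x, |g x| ≤ C) →
      ∫ ω, A ω * (if Z ω = 0 then (1:ℝ) else 0) * g (X ω) ∂P
        = ∫ ω, l0 (X ω) * (if Z ω = 0 then (1:ℝ) else 0) * g (X ω) ∂P)
    (hl1v : ∀ g : S → ℝ, Measurable g → (∃ C, ∀ x, |g x| ≤ C) →
      ∫ ω, A ω * (if Z ω = 1 then (1:ℝ) else 0) * g (X ω) ∂P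
        = ∫ ω, l1 (X ω) * (if Z ω = 1 then (1:ℝ) else 0) * g (X ω) ∂P)
    (hMono : P {ω | A0 ω ≤ A1 ω} = 1) :
    (P[fun ω => m1 (X ω) - m0 (X ω) | MeasurableSpace.comap (fun ω => f (X ω)) mT]
      =ᵐ[P]
        P[Set.indicator {ω | A1 ω = 1 ∧ A0 ω = 0} (fun ω => Y1 ω - Y0 ω)
          | MeasurableSpace.comap (fun ω => f (X ω)) mT])
    ∧ (P[fun ω => l1 (X ω) - l0 (X ω) | MeasurableSpace.comap (fun ω => f (X ω)) mT]
      =ᵐ[P]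
        P[Set.indicator {ω | A1 ω = 1 ∧ A0 ω = 0} (fun _ => (1:ℝ))
          | MeasurableSpace.comap (fun ω => f (X ω)) mT]) :=
  stmt_18_general P (mS := mS) (mT := mT) X hX f hf Z A0 A1 Y0 Y1 hZ hA0 hA1 hY0 hY1 hZ01 hA0_01
    hA1_01 hY0b hY1b A Y hA hY e he ε hε hebd hVe hUnconf m0 m1 l0 l1 hm0 hm1 hl0 hl1 hm0v hm1v hl0v
    hl1v hMono
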